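/- (One-layer warmup theorem: spectral scaling gives correctly-sized feature updates.) Let 0 < a ≤ A, let m, n ≥ 1, let h, Δh ∈ ℝ^n, W ∈ ℝ^{m×n}, u ∈ ℝ^m, and set ΔW = u hᵀ. Assume: a√n ≤ ‖h‖₂ ≤ A√n; ‖Δh‖₂ ≤ A√n; ‖W‖_* ≤ A√(m/n); a√(m/n) ≤ ‖ΔW‖_* ≤ A√(m/n); and ‖W Δh + ΔW Δh‖₂ ≤ (1/2)‖ΔW h‖₂. Then Δh' = (W + ΔW)(h + Δh) − W h satisfies (a²/2)√m ≤ ‖Δh'‖₂ ≤ 3A²√m. -/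
import Mathlib


open scoped BigOperators
open Matrix MeasureTheory ProbabilityTheory Filter

/-- The Euclidean norm of a vector in `ℝ^n`. -/
noncomputable def enorm2 {n : ℕ} (v : Fin n → ℝ) : ℝ := Real.sqrt (∑ i, v i ^ 2)

/-- The spectral norm of a matrix `A ∈ ℝ^{m×n}`: the supremum over nonzero `v`
of `‖A v‖₂ / ‖v‖₂`. -/
noncomputable def specNorm {m n : ℕ} (A : Matrix (Fin m) (Fin n) ℝ) : ℝ :=
  sSup {c : ℝ | ∃ v : Fin n → ℝ, v ≠ 0 ∧ c = enorm2 (A.mulVec v) / enorm2 v}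

/-- The Frobenius norm of a matrix `A ∈ ℝ^{m×n}`. -/
noncomputable def frobNorm {m n : ℕ} (A : Matrix (Fin m) (Fin n) ℝ) : ℝ :=
  Real.sqrt (∑ i, ∑ j, A i j ^ 2)

lemma enorm2_eq_norm {n : ℕ} (v : Fin n → ℝ) :
    enorm2 v = ‖(WithLp.equiv 2 (Fin n → ℝ)).symm v‖ := by
  rw [EuclideanSpace.norm_eq]
  simp [enorm2, Real.norm_eq_abs, sq_abs]

lemma enorm2_nonneg {n : ℕ} (v : Fin n → ℝ) : 0 ≤ enorm2 v := Real.sqrt_nonneg _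

lemma enorm2_smul {n : ℕ} (c : ℝ) (v : Fin n → ℝ) : enorm2 (c • v) = |c| * enorm2 v := by
  rw [enorm2_eq_norm, enorm2_eq_norm]
  have : (WithLp.equiv 2 (Fin n → ℝ)).symm (c • v)
      = c • (WithLp.equiv 2 (Fin n → ℝ)).symm v := rfl
  rw [this, norm_smul, Real.norm_eq_abs]

lemma enorm2_pos {n : ℕ} {v : Fin n → ℝ} (hv : v ≠ 0) : 0 < enorm2 v := by
  rw [enorm2_eq_norm]
  simpa using hv

lemma enorm2_add_le {n : ℕ} (x y : Fin n → ℝ) : enorm2 (x + y) ≤ enorm2 x + enorm2 y := by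
  rw [enorm2_eq_norm, enorm2_eq_norm, enorm2_eq_norm]
  exact norm_add_le ((WithLp.equiv 2 (Fin n → ℝ)).symm x) ((WithLp.equiv 2 (Fin n → ℝ)).symm y)

lemma enorm2_add_ge {n : ℕ} (x y : Fin n → ℝ) : enorm2 x - enorm2 y ≤ enorm2 (x + y) := by
  have := enorm2_add_le (x + y) (-y)
  have h1 : enorm2 (-y) = enorm2 y := by simp [enorm2]
  simp only [add_neg_cancel_right] at this
  linarith

lemma dot_le {n : ℕ} (h v : Fin n → ℝ) : |h ⬝ᵥ v| ≤ enorm2 h * enorm2 v := by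
  rw [enorm2_eq_norm, enorm2_eq_norm]
  have := abs_real_inner_le_norm ((WithLp.equiv 2 (Fin n → ℝ)).symm h)
    ((WithLp.equiv 2 (Fin n → ℝ)).symm v)
  simpa [PiLp.inner_apply, dotProduct, RCLike.inner_apply, mul_comm] using this

lemma dot_self {n : ℕ} (h : Fin n → ℝ) : h ⬝ᵥ h = (enorm2 h) ^ 2 := by
  rw [enorm2, Real.sq_sqrt (by positivity)]
  simp [dotProduct, sq]

lemma mulVec_frob_le {m n : ℕ} (A : Matrix (Fin m) (Fin n) ℝ) (v : Fin n → ℝ) :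
    enorm2 (A.mulVec v) ≤ frobNorm A * enorm2 v := by
  have key : ∑ i, (A.mulVec v i) ^ 2 ≤ (∑ i, ∑ j, A i j ^ 2) * (∑ j, v j ^ 2) := by
    rw [Finset.sum_mul]
    apply Finset.sum_le_sum
    intro i _
    simpa [mulVec, dotProduct] using
      Finset.sum_mul_sq_le_sq_mul_sq Finset.univ (fun j => A i j) v
  calc enorm2 (A.mulVec v) ≤ Real.sqrt ((∑ i, ∑ j, A i j ^ 2) * (∑ j, v j ^ 2)) :=
        Real.sqrt_le_sqrt key
    _ = frobNorm A * enorm2 v := by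
        rw [Real.sqrt_mul (by positivity)]; rfl

lemma specSet_bdd {m n : ℕ} (A : Matrix (Fin m) (Fin n) ℝ) :
    BddAbove {c : ℝ | ∃ v : Fin n → ℝ, v ≠ 0 ∧ c = enorm2 (A.mulVec v) / enorm2 v} := by
  refine ⟨frobNorm A, ?_⟩
  rintro c ⟨v, hv, rfl⟩
  rw [div_le_iff₀ (enorm2_pos hv)]
  exact mulVec_frob_le A v

lemma vecMulVec_mulVec' {m n : ℕ} (u : Fin m → ℝ) (h v : Fin n → ℝ) :
    (Matrix.vecMulVec u h).mulVec v = (h ⬝ᵥ v) • u := by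
  funext i
  simp only [mulVec, vecMulVec_apply, dotProduct, Pi.smul_apply, smul_eq_mul,
    Finset.sum_mul, Finset.mul_sum]
  exact Finset.sum_congr rfl fun j _ => by ring

lemma specNorm_vecMulVec {m n : ℕ} (u : Fin m → ℝ) {h : Fin n → ℝ} (hh : h ≠ 0) :
    specNorm (Matrix.vecMulVec u h) = enorm2 u * enorm2 h := by
  apply le_antisymm
  · refine csSup_le ⟨_, h, hh, rfl⟩ ?_
    rintro c ⟨v, hv, rfl⟩
    rw [div_le_iff₀ (enorm2_pos hv), vecMulVec_mulVec', enorm2_smul]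
    calc |h ⬝ᵥ v| * enorm2 u ≤ (enorm2 h * enorm2 v) * enorm2 u :=
          mul_le_mul_of_nonneg_right (dot_le h v) (enorm2_nonneg u)
      _ = enorm2 u * enorm2 h * enorm2 v := by ring
  · refine le_csSup (specSet_bdd _) ⟨h, hh, ?_⟩
    rw [vecMulVec_mulVec', dot_self, enorm2_smul, abs_of_nonneg (by positivity)]
    rw [eq_div_iff (enorm2_pos hh).ne']
    ring

/-- One-layer warmup theorem: spectral scaling gives correctly-sized
feature updates. Under the feature-learning desideratum at the input, the spectral
scaling condition, the rank-one update structure `ΔW = u hᵀ`, and non-cancellation,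
the output feature update satisfies `(a²/2)√m ≤ ‖Δh'‖₂ ≤ 3A²√m`. -/
theorem one_layer_warmup {m n : ℕ} (hm : 1 ≤ m) (hn : 1 ≤ n)
    (a A : ℝ) (ha : 0 < a) (haA : a ≤ A)
    (h Δh : Fin n → ℝ) (W : Matrix (Fin m) (Fin n) ℝ) (u : Fin m → ℝ)
    (hhlo : a * Real.sqrt n ≤ enorm2 h) (hhhi : enorm2 h ≤ A * Real.sqrt n)
    (hΔh : enorm2 Δh ≤ A * Real.sqrt n)
    (hW : specNorm W ≤ A * Real.sqrt ((m : ℝ) / n))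
    (hΔWlo : a * Real.sqrt ((m : ℝ) / n) ≤ specNorm (Matrix.vecMulVec u h))
    (hΔWhi : specNorm (Matrix.vecMulVec u h) ≤ A * Real.sqrt ((m : ℝ) / n))
    (hcancel :
      enorm2 (W.mulVec Δh + (Matrix.vecMulVec u h).mulVec Δh) ≤
        (1 / 2) * enorm2 ((Matrix.vecMulVec u h).mulVec h)) :
    (a ^ 2 / 2) * Real.sqrt m ≤
        enorm2 ((W + Matrix.vecMulVec u h).mulVec (h + Δh) - W.mulVec h) ∧
      enorm2 ((W + Matrix.vecMulVec u h).mulVec (h + Δh) - W.mulVec h) ≤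
        3 * A ^ 2 * Real.sqrt m := by
  have hn0 : (0:ℝ) < n := by exact_mod_cast hn
  have hsn : 0 < Real.sqrt n := Real.sqrt_pos.mpr hn0
  have hhpos : 0 < enorm2 h := lt_of_lt_of_le (by positivity) hhlo
  have hh0 : h ≠ 0 := by
    intro e
    rw [e] at hhpos
    simp [enorm2] at hhpos
  have hsq : Real.sqrt ((m : ℝ) / n) * Real.sqrt n = Real.sqrt m := by
    rw [← Real.sqrt_mul (by positivity), div_mul_cancel₀ _ hn0.ne']
  -- the key quantity D = ‖ΔW h‖
  set ΔW := Matrix.vecMulVec u h with hΔW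
  have hDval : enorm2 (ΔW.mulVec h) = specNorm ΔW * enorm2 h := by
    rw [specNorm_vecMulVec u hh0, vecMulVec_mulVec', dot_self, enorm2_smul,
      abs_of_nonneg (by positivity)]
    ring
  have hDlo : a ^ 2 * Real.sqrt m ≤ enorm2 (ΔW.mulVec h) := by
    rw [hDval]
    calc a ^ 2 * Real.sqrt m = (a * Real.sqrt ((m : ℝ) / n)) * (a * Real.sqrt n) := by
          rw [← hsq]; ring
      _ ≤ specNorm ΔW * enorm2 h := by
          apply mul_le_mul hΔWlo hhlo (by positivity)
          exact le_trans (by positivity) hΔWlo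
  have hDhi : enorm2 (ΔW.mulVec h) ≤ A ^ 2 * Real.sqrt m := by
    rw [hDval]
    calc specNorm ΔW * enorm2 h ≤ (A * Real.sqrt ((m : ℝ) / n)) * (A * Real.sqrt n) := by
          apply mul_le_mul hΔWhi hhhi (enorm2_nonneg h) (mul_nonneg (ha.trans_le haA).le (Real.sqrt_nonneg _))
      _ = A ^ 2 * Real.sqrt m := by rw [← hsq]; ring
  -- decomposition
  have decomp : (W + ΔW).mulVec (h + Δh) - W.mulVec h
      = ΔW.mulVec h + (W.mulVec Δh + ΔW.mulVec Δh) := by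
    funext i
    simp only [Matrix.add_mulVec, Matrix.mulVec_add, Pi.add_apply, Pi.sub_apply]
    ring
  rw [decomp]
  constructor
  · have := enorm2_add_ge (ΔW.mulVec h) (W.mulVec Δh + ΔW.mulVec Δh)
    linarith
  · have := enorm2_add_le (ΔW.mulVec h) (W.mulVec Δh + ΔW.mulVec Δh)
    nlinarith [Real.sqrt_nonneg (m:ℝ), sq_nonneg A, mul_nonneg (sq_nonneg A) (Real.sqrt_nonneg (m:ℝ))]
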